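/- Let f1(x; μ, τ) = (1/x)√(τ/(2π)) exp(−τ(log x − μ)²/2) for x > 0 be the lognormal density with parameters μ ∈ ℝ, τ > 0, and let f2(x; λ, κ) = (κ/λ)(x/λ)^{κ−1} exp(−(x/λ)^κ) for x > 0 be the Weibull density with parameters λ, κ > 0. Then D_KL(f1(·; μ, τ) ‖ f2(·; λ, κ)) = −μ + (1/2) log(τ/(2π)) − 1/2 − log κ + log λ − (κ − 1)(μ − log λ) + λ^{−κ} exp(κ²/(2τ) + μκ). -/

import Mathlib

/-! In the coordinate `y = log x` the lognormal law is the normal law with mean `μ` and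
variance `1/τ`, and the log-likelihood ratio against the Weibull density is
`a + b y + c (y - μ)² + d exp (κ y)`. Its normal expectation is therefore read off from the
mean, the variance and the moment generating function `exp (μ κ + κ² / (2τ))`. -/

open MeasureTheory Real

/-- Kullback--Leibler divergence between two densities on `(0, ∞)` (i.e. `∫₀^∞`). -/
noncomputable def klDivPos (f g : ℝ → ℝ) : ℝ :=
  ∫ x in Set.Ioi (0:ℝ), f x * Real.log (f x / g x)

/-- Lognormal density with log-scale `μ` and precision-type parameter `τ`. -/
noncomputable def lognormalPdf (μ τ : ℝ) (x : ℝ) : ℝ :=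
  (1 / x) * Real.sqrt (τ / (2 * Real.pi)) * Real.exp (-(τ * (Real.log x - μ) ^ 2) / 2)

/-- Weibull density with scale `λ` and shape `κ` (real powers). -/
noncomputable def weibullPdf (lam κ : ℝ) (x : ℝ) : ℝ :=
  (κ / lam) * (x / lam) ^ (κ - 1) * Real.exp (-((x / lam) ^ κ))

open ProbabilityTheory
open scoped NNReal

theorem integral_Ioi_zero_eq_integral_exp_smul_comp_exp {E : Type*} [NormedAddCommGroup E]
    [NormedSpace ℝ E] (g : ℝ → E) :
    ∫ x in Set.Ioi 0, g x = ∫ y, exp y • g (exp y) := by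
  have h := integral_image_eq_integral_abs_deriv_smul MeasurableSet.univ
    (fun y _ => (hasDerivAt_exp y).hasDerivWithinAt) exp_injective.injOn g
  rw [Set.image_univ, range_exp, Measure.restrict_univ] at h
  simpa only [abs_of_pos (exp_pos _)] using h

theorem integral_gaussianReal_quadratic_add_exp (m : ℝ) (v : ℝ≥0) (a b c d k : ℝ) :
    ∫ y, (a + b * y + c * (y - m) ^ 2 + d * exp (k * y)) ∂gaussianReal m v =
      a + b * m + c * v + d * exp (m * k + v * k ^ 2 / 2) := by
  have h_id : Integrable (fun y : ℝ => y) (gaussianReal m v) :=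
    (memLp_id_gaussianReal 1).integrable le_rfl
  have h_sq : Integrable (fun y : ℝ => (y - m) ^ 2) (gaussianReal m v) :=
    ((memLp_id_gaussianReal 2).sub (memLp_const m)).integrable_sq
  have h_exp := integrable_exp_mul_gaussianReal (μ := m) (v := v) k
  have h_var : ∫ y, (y - m) ^ 2 ∂gaussianReal m v = v := by
    rw [← variance_fun_id_gaussianReal (μ := m),
      variance_eq_integral measurable_id'.aemeasurable, integral_id_gaussianReal]
  have h_mgf : ∫ y, exp (k * y) ∂gaussianReal m v = exp (m * k + v * k ^ 2 / 2) :=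
    congrFun (mgf_fun_id_gaussianReal (μ := m) (v := v)) k
  have h_lin : Integrable (fun y : ℝ => a + b * y) (gaussianReal m v) :=
    (integrable_const a).add (h_id.const_mul b)
  have h_quad : Integrable (fun y : ℝ => a + b * y + c * (y - m) ^ 2) (gaussianReal m v) :=
    h_lin.add (h_sq.const_mul c)
  rw [integral_add h_quad (h_exp.const_mul d), integral_add h_lin (h_sq.const_mul c),
    integral_add (integrable_const a) (h_id.const_mul b), integral_const_mul, integral_const_mul,
    integral_const_mul, integral_const, integral_id_gaussianReal, h_var, h_mgf]
  simp

section LogCoordinates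

variable (y : ℝ)

theorem exp_mul_lognormalPdf_exp {τ : ℝ} (μ : ℝ) (hτ : 0 < τ) :
    exp y * lognormalPdf μ τ (exp y) = gaussianPDFReal μ τ⁻¹.toNNReal y := by
  have h_sqrt : (√(2 * π * τ⁻¹))⁻¹ = √(τ / (2 * π)) := by
    rw [← Real.sqrt_inv]
    congr 1
    field_simp
  rw [lognormalPdf, gaussianPDFReal, Real.coe_toNNReal _ (inv_pos.2 hτ).le, h_sqrt, log_exp]
  field_simp

theorem lognormalPdf_pos {τ x : ℝ} (μ : ℝ) (hτ : 0 < τ) (hx : 0 < x) :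
    0 < lognormalPdf μ τ x := by
  unfold lognormalPdf; positivity

theorem weibullPdf_pos {lam κ x : ℝ} (hlam : 0 < lam) (hκ : 0 < κ) (hx : 0 < x) :
    0 < weibullPdf lam κ x := by
  unfold weibullPdf; positivity

theorem log_lognormalPdf_exp {τ : ℝ} (μ : ℝ) (hτ : 0 < τ) :
    log (lognormalPdf μ τ (exp y)) = log (τ / (2 * π)) / 2 - y - τ / 2 * (y - μ) ^ 2 := by
  rw [lognormalPdf, log_mul (by positivity) (exp_ne_zero _), log_mul (by positivity)
    (by positivity), log_exp, one_div, log_inv, log_exp, log_sqrt (by positivity)]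
  ring

theorem log_weibullPdf_exp {lam κ : ℝ} (hlam : 0 < lam) (hκ : 0 < κ) :
    log (weibullPdf lam κ (exp y)) =
      log κ - κ * log lam + (κ - 1) * y - lam ^ (-κ) * exp (κ * y) := by
  have h_pow (p : ℝ) : (exp y / lam) ^ p = lam ^ (-p) * exp (p * y) := by
    rw [div_eq_mul_inv, mul_rpow (exp_pos y).le (inv_nonneg.2 hlam.le), ← exp_mul,
      rpow_neg hlam.le, inv_rpow hlam.le, mul_comm, mul_comm y]
  rw [weibullPdf, log_mul (by positivity) (exp_ne_zero _), log_mul (by positivity)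
    (by positivity), log_exp, log_div hκ.ne' hlam.ne', h_pow, h_pow, log_mul (by positivity)
    (exp_ne_zero _), log_exp, log_rpow hlam]
  ring

end LogCoordinates

/-- the Kullback--Leibler divergence from the lognormal(μ, τ) density to the
Weibull(λ, κ) density is
`−μ + (1/2) log(τ/(2π)) − 1/2 − log κ + log λ − (κ − 1)(μ − log λ) + λ^{−κ} exp(κ²/(2τ) + μκ)`. -/
theorem kl_lognormal_weibull (μ τ lam κ : ℝ) (hτ : 0 < τ) (hlam : 0 < lam) (hκ : 0 < κ) :
    klDivPos (lognormalPdf μ τ) (weibullPdf lam κ) =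
      -μ + (1 / 2) * Real.log (τ / (2 * Real.pi)) - 1 / 2 - Real.log κ + Real.log lam -
        (κ - 1) * (μ - Real.log lam) + lam ^ (-κ) * Real.exp (κ ^ 2 / (2 * τ) + μ * κ) := by
  set v := τ⁻¹.toNNReal
  have hv : (v : ℝ) = τ⁻¹ := Real.coe_toNNReal _ (inv_pos.2 hτ).le
  have h_integrand (y : ℝ) :
      exp y • (lognormalPdf μ τ (exp y) *
        log (lognormalPdf μ τ (exp y) / weibullPdf lam κ (exp y))) =
      gaussianPDFReal μ v y • (log (τ / (2 * π)) / 2 - log κ + κ * log lam + (-κ) * y +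
        (-(τ / 2)) * (y - μ) ^ 2 + lam ^ (-κ) * exp (κ * y)) := by
    rw [smul_eq_mul, ← mul_assoc, exp_mul_lognormalPdf_exp y μ hτ,
      log_div (lognormalPdf_pos μ hτ (exp_pos y)).ne'
        (weibullPdf_pos hlam hκ (exp_pos y)).ne',
      log_lognormalPdf_exp y μ hτ, log_weibullPdf_exp y hlam hκ, smul_eq_mul]
    ring
  rw [klDivPos, integral_Ioi_zero_eq_integral_exp_smul_comp_exp]
  simp_rw [h_integrand]
  rw [← integral_gaussianReal_eq_integral_smul (by positivity),
    integral_gaussianReal_quadratic_add_exp, hv]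
  have h_mgf_arg : μ * κ + τ⁻¹ * κ ^ 2 / 2 = κ ^ 2 / (2 * τ) + μ * κ := by ring
  have h_half : τ / 2 * τ⁻¹ = 1 / 2 := by field_simp
  rw [h_mgf_arg, neg_mul (τ / 2), h_half]
  ring
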